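/- arXiv:2511.00874 — 2 statements merged into one kernel-verified Lean document; each statement's English description precedes it below -/
import Mathlib

section
/- Let L : ℝ^d → ℝ be differentiable with 𝓛-Lipschitz gradient (𝓛 > 0). Let w ∈ ℝ^d, let G be a square-integrable ℝ^d-valued random vector with mean Ĝ = E[G], and suppose ‖Ĝ − ∇L(w)‖ ≤ B for some B ≥ 0 and E[‖G − Ĝ‖²] ≤ V² for some V ≥ 0. Let 0 < η ≤ 1/(4𝓛) and w' = w − η·G. Then the one-step descent inequality holds: (η/4)·‖∇L(w)‖² ≤ L(w) − E[L(w')] + η·(1/2 + η𝓛)·B² + (η²·𝓛/2)·V². -/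
/-!
Averaging the descent lemma `L(w + v) ≤ L(w) + ⟪∇L(w), v⟫ + 𝓛/2 ‖v‖²` over `v = -ηG`, and splitting
`E‖G‖² = E‖G - Ĝ‖² + ‖Ĝ‖²`, gives
`E[L(w')] ≤ L(w) - η⟪∇L(w), Ĝ⟫ + 𝓛η²/2 (E‖G - Ĝ‖² + ‖Ĝ‖²)`.
The bias enters through the polarization identity: with `g = ∇L(w)` and `a = η𝓛 ≤ 1`,
`⟪g, Ĝ⟫ - a/2 ‖Ĝ‖² + ‖Ĝ - g‖²/2 = ‖g‖²/2 + (1 - a)/2 ‖Ĝ‖² ≥ ‖g‖²/2`.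
-/

open MeasureTheory RealInnerProductSpace Set

section DescentLemma

variable {E : Type*} [NormedAddCommGroup E] [InnerProductSpace ℝ E] [CompleteSpace E]
  {f : E → ℝ} {C : ℝ}

theorem abs_sub_sub_inner_gradient_le_of_lipschitz_gradient (hf : Differentiable ℝ f)
    (hlip : ∀ x y, ‖gradient f y - gradient f x‖ ≤ C * ‖y - x‖) (x y : E) :
    |f y - f x - ⟪gradient f x, y - x⟫| ≤ C / 2 * ‖y - x‖ ^ 2 := by
  set v := y - x
  let φ : ℝ → ℝ := fun t => f (x + t • v) - f x - t * ⟪gradient f x, v⟫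
  have hφ (t : ℝ) : HasDerivAt φ ⟪gradient f (x + t • v) - gradient f x, v⟫ t := by
    have hline : HasDerivAt (fun t : ℝ => x + t • v) v t := by
      simpa using ((hasDerivAt_id t).smul_const v).const_add x
    exact ((((hf _).hasGradientAt.hasFDerivAt.comp_hasDerivAt t hline).sub_const (f x)).sub
      ((hasDerivAt_id t).mul_const ⟪gradient f x, v⟫)).congr_deriv (by simp [inner_sub_left])
  have hbound (t : ℝ) (ht : t ∈ Ico (0 : ℝ) 1) :
      ‖⟪gradient f (x + t • v) - gradient f x, v⟫‖ ≤ C * t * ‖v‖ ^ 2 :=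
    calc ‖⟪gradient f (x + t • v) - gradient f x, v⟫‖
        ≤ ‖gradient f (x + t • v) - gradient f x‖ * ‖v‖ := norm_inner_le_norm _ _
      _ ≤ C * ‖x + t • v - x‖ * ‖v‖ := by gcongr; exact hlip _ _
      _ = C * t * ‖v‖ ^ 2 := by
        rw [add_sub_cancel_left, norm_smul, Real.norm_of_nonneg ht.1]; ring
  have := image_norm_le_of_norm_deriv_right_le_deriv_boundary (a := 0) (b := 1)
    (fun t _ => (hφ t).continuousAt.continuousWithinAt) (fun t _ => (hφ t).hasDerivWithinAt)
    (B := fun t => C / 2 * t ^ 2 * ‖v‖ ^ 2) (by simp [φ])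
    (fun t => (((hasDerivAt_pow 2 t).const_mul (C / 2)).mul_const (‖v‖ ^ 2)).congr_deriv
      (by push_cast; ring))
    hbound (right_mem_Icc.mpr zero_le_one)
  simpa [φ, v] using this

end DescentLemma

section Expectation

variable {Ω E : Type*} [MeasurableSpace Ω] {μ : Measure Ω}
  [NormedAddCommGroup E] [InnerProductSpace ℝ E] [CompleteSpace E] {f : E → ℝ} {C : ℝ}
  {X : Ω → E}

theorem integrable_comp_add_of_lipschitz_gradient [IsFiniteMeasure μ] (hf : Differentiable ℝ f)
    (hlip : ∀ x y, ‖gradient f y - gradient f x‖ ≤ C * ‖y - x‖) (x : E) (hX : MemLp X 2 μ) :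
    Integrable (fun ω => f (x + X ω)) μ := by
  have hlin : Integrable (fun ω => f x + ⟪gradient f x, X ω⟫) μ :=
    (integrable_const _).add ((hX.integrable one_le_two).const_inner _)
  have hrem : Integrable (fun ω => f (x + X ω) - (f x + ⟪gradient f x, X ω⟫)) μ := by
    refine ((hX.integrable_norm_pow two_ne_zero).const_mul (C / 2)).mono'
      ((hf.continuous.comp_aestronglyMeasurable (aestronglyMeasurable_const.add hX.1)).sub
        hlin.1) (Filter.Eventually.of_forall fun ω => ?_)
    simpa [sub_sub] using abs_sub_sub_inner_gradient_le_of_lipschitz_gradient hf hlip x (x + X ω)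
  exact (hrem.add hlin).congr (.of_forall fun ω => sub_add_cancel _ _)

theorem integral_comp_add_le_of_lipschitz_gradient [IsProbabilityMeasure μ]
    (hf : Differentiable ℝ f) (hlip : ∀ x y, ‖gradient f y - gradient f x‖ ≤ C * ‖y - x‖)
    (x : E) (hX : MemLp X 2 μ) :
    ∫ ω, f (x + X ω) ∂μ ≤ f x + ⟪gradient f x, ∫ ω, X ω ∂μ⟫ + C / 2 * ∫ ω, ‖X ω‖ ^ 2 ∂μ := by
  have hlin : Integrable (fun ω => f x + ⟪gradient f x, X ω⟫) μ :=
    (integrable_const _).add ((hX.integrable one_le_two).const_inner _)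
  have hquad : Integrable (fun ω => C / 2 * ‖X ω‖ ^ 2) μ :=
    (hX.integrable_norm_pow two_ne_zero).const_mul _
  calc ∫ ω, f (x + X ω) ∂μ
      ≤ ∫ ω, (f x + ⟪gradient f x, X ω⟫ + C / 2 * ‖X ω‖ ^ 2) ∂μ := by
        refine integral_mono (integrable_comp_add_of_lipschitz_gradient hf hlip x hX)
          (hlin.add hquad) fun ω => ?_
        have := abs_sub_sub_inner_gradient_le_of_lipschitz_gradient hf hlip x (x + X ω)
        simp only [add_sub_cancel_left] at this
        linarith [(abs_le.mp this).2]
    _ = f x + ⟪gradient f x, ∫ ω, X ω ∂μ⟫ + C / 2 * ∫ ω, ‖X ω‖ ^ 2 ∂μ := by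
        rw [integral_add hlin hquad, integral_add (integrable_const _)
          ((hX.integrable one_le_two).const_inner _), integral_const,
          integral_inner (hX.integrable one_le_two), integral_const_mul]
        simp

theorem integral_norm_sq_eq_integral_norm_sub_integral_sq_add [IsProbabilityMeasure μ]
    (hX : MemLp X 2 μ) :
    ∫ ω, ‖X ω‖ ^ 2 ∂μ = ∫ ω, ‖X ω - ∫ ω', X ω' ∂μ‖ ^ 2 ∂μ + ‖∫ ω, X ω ∂μ‖ ^ 2 := by
  set m := ∫ ω, X ω ∂μ
  have hXint := hX.integrable one_le_two
  have hXsq : Integrable (fun ω => ‖X ω‖ ^ 2) μ := hX.integrable_norm_pow two_ne_zero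
  have hcross : Integrable (fun ω => 2 * ⟪m, X ω⟫) μ := (hXint.const_inner m).const_mul 2
  have hdiff : Integrable (fun ω => ‖X ω‖ ^ 2 - 2 * ⟪m, X ω⟫) μ := hXsq.sub hcross
  simp_rw [norm_sub_sq_real, real_inner_comm m]
  rw [integral_add hdiff (integrable_const _), integral_sub hXsq hcross, integral_const_mul,
    integral_inner hXint, integral_const, real_inner_self_eq_norm_sq]
  simp only [probReal_univ, smul_eq_mul, one_mul]
  ring

end Expectation

theorem one_step_descent_general
    {Ω : Type*} [MeasurableSpace Ω] (μ : Measure Ω) [IsProbabilityMeasure μ]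
    (d : ℕ) (L : EuclideanSpace ℝ (Fin d) → ℝ) (𝓛 : ℝ) (h𝓛 : 0 < 𝓛)
    (hdiff : Differentiable ℝ L)
    (hlip : ∀ w w' : EuclideanSpace ℝ (Fin d),
      ‖gradient L w' - gradient L w‖ ≤ 𝓛 * ‖w' - w‖)
    (w : EuclideanSpace ℝ (Fin d))
    (G : Ω → EuclideanSpace ℝ (Fin d)) (hG : MemLp G 2 μ)
    (B V : ℝ)
    (hbias : ‖(∫ ω, G ω ∂μ) - gradient L w‖ ≤ B)
    (hvar : ∫ ω, ‖G ω - ∫ ω', G ω' ∂μ‖ ^ 2 ∂μ ≤ V ^ 2)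
    (η : ℝ) (hη : 0 < η) (hη' : η ≤ 1 / (4 * 𝓛)) :
    (η / 4) * ‖gradient L w‖ ^ 2 ≤
      L w - (∫ ω, L (w - η • G ω) ∂μ)
        + η * (1 / 2 + η * 𝓛) * B ^ 2 + (η ^ 2 * 𝓛 / 2) * V ^ 2 := by
  have hηL : η * 𝓛 ≤ 1 := by
    rw [le_div_iff₀ (by positivity)] at hη'
    linarith
  have hstep := integral_comp_add_le_of_lipschitz_gradient hdiff hlip w (hG.const_smul (-η))
  simp only [Pi.smul_apply, neg_smul, ← sub_eq_add_neg, integral_neg, integral_smul, norm_neg,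
    norm_smul, mul_pow, Real.norm_eq_abs, sq_abs, integral_const_mul, inner_neg_right,
    real_inner_smul_right] at hstep
  rw [integral_norm_sq_eq_integral_norm_sub_integral_sq_add hG] at hstep
  set g := gradient L w
  set m := ∫ ω, G ω ∂μ
  have hpolar := norm_sub_sq_real m g
  have hbias_sq : ‖m - g‖ ^ 2 ≤ B ^ 2 := pow_le_pow_left₀ (norm_nonneg _) hbias 2
  nlinarith [mul_le_mul_of_nonneg_left hvar (by positivity : (0:ℝ) ≤ η ^ 2 * 𝓛 / 2),
    mul_le_mul_of_nonneg_left hbias_sq hη.le, real_inner_comm g m,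
    mul_nonneg (mul_nonneg hη.le (sub_nonneg.2 hηL)) (sq_nonneg ‖m‖),
    mul_nonneg hη.le (sq_nonneg ‖g‖), mul_nonneg (mul_nonneg (sq_nonneg η) h𝓛.le) (sq_nonneg B)]

/-- One-step descent inequality for SGD with a biased, noisy gradient estimator: if `L` is
differentiable with `𝓛`-Lipschitz gradient, `G` is a square-integrable random vector with
mean `Ĝ`, bias `‖Ĝ − ∇L(w)‖ ≤ B`, variance `E[‖G − Ĝ‖²] ≤ V²`, and `0 < η ≤ 1/(4𝓛)`, then
for `w' = w − η·G`:
`(η/4)·‖∇L(w)‖² ≤ L(w) − E[L(w')] + η·(1/2 + η𝓛)·B² + (η²·𝓛/2)·V²`. -/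
theorem one_step_descent
    {Ω : Type*} [MeasurableSpace Ω] (μ : Measure Ω) [IsProbabilityMeasure μ]
    (d : ℕ) (L : EuclideanSpace ℝ (Fin d) → ℝ) (𝓛 : ℝ) (h𝓛 : 0 < 𝓛)
    (hdiff : Differentiable ℝ L)
    (hlip : ∀ w w' : EuclideanSpace ℝ (Fin d),
      ‖gradient L w' - gradient L w‖ ≤ 𝓛 * ‖w' - w‖)
    (w : EuclideanSpace ℝ (Fin d))
    (G : Ω → EuclideanSpace ℝ (Fin d)) (hG : MemLp G 2 μ)
    (B V : ℝ) (hB : 0 ≤ B) (hV : 0 ≤ V)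
    (hbias : ‖(∫ ω, G ω ∂μ) - gradient L w‖ ≤ B)
    (hvar : ∫ ω, ‖G ω - ∫ ω', G ω' ∂μ‖ ^ 2 ∂μ ≤ V ^ 2)
    (η : ℝ) (hη : 0 < η) (hη' : η ≤ 1 / (4 * 𝓛)) :
    (η / 4) * ‖gradient L w‖ ^ 2 ≤
      L w - (∫ ω, L (w - η • G ω) ∂μ)
        + η * (1 / 2 + η * 𝓛) * B ^ 2 + (η ^ 2 * 𝓛 / 2) * V ^ 2 :=
  one_step_descent_general μ d L 𝓛 h𝓛 hdiff hlip w G hG B V hbias hvar η hη hη'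
end

section
/- Let (Ω, 𝓕, P) be a probability space with filtration (𝓕_t)_{t≥0}. Let L : ℝ^d → ℝ be differentiable with 𝓛-Lipschitz gradient (𝓛 > 0) and bounded below by L_min. Fix a step size 0 < η ≤ 1/(4𝓛), a horizon T ≥ 1, constants B_W ≥ 0, σ_S ≥ 0, σ_Q ≥ 0, and batch size b ≥ 1. Let (w_t)_{t≥0} be an adapted ℝ^d-valued process with w_0 ∈ 𝓕_0, and let (G_t)_{t≥0} be square-integrable ℝ^d-valued random vectors with G_t measurable with respect to 𝓕_{t+1}, satisfying the update w_{t+1} = w_t − η·G_t. Suppose for every t: (i) ‖E[G_t | 𝓕_t] − ∇L(w_t)‖ ≤ B_W almost surely, and (ii) E[‖G_t − E[G_t | 𝓕_t]‖² | 𝓕_t] ≤ (σ_S² + σ_Q²)/b almost surely. Then (1/T)·Σ_{t=0}^{T−1} E[‖∇L(w_t)‖²] ≤ 4·(E[L(w_0)] − L_min)/(η·T) + (2 + 4η𝓛)·B_W² + 2η𝓛·(σ_S² + σ_Q²)/b. -/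
/-!
For an `𝓛`-smooth `L` the descent lemma gives
`L(w_{t+1}) ≤ L(w_t) - η ⟪∇L(w_t), G_t⟫ + 𝓛 η² ‖G_t‖² / 2`.
In expectation, the pull-out property replaces `G_t` by its conditional mean in the inner
product, which the bias bound makes at least `‖∇L(w_t)‖² / 2 - B_W² / 2`, while the second
moment of `G_t` splits orthogonally into the conditional variance and the squared conditional
mean. Because `η 𝓛 ≤ 1/4`, every step then lowers `E[L(w_t)]` by at least
`η E‖∇L(w_t)‖² / 4` minus a noise floor, and telescoping against `L_min` gives the bound.
Integrability of each `L(w_t)` follows inductively from the same descent inequality and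
`‖∇L‖² ≤ 2 𝓛 (L - L_min)`.
-/

open MeasureTheory
open scoped RealInnerProductSpace

section Smooth

variable {E : Type*} [NormedAddCommGroup E] [InnerProductSpace ℝ E] [CompleteSpace E]
  {f : E → ℝ} {K : ℝ}

theorem continuous_gradient_of_lipschitz
    (hK : ∀ x y : E, ‖gradient f y - gradient f x‖ ≤ K * ‖y - x‖) :
    Continuous (gradient f) :=
  (LipschitzWith.of_dist_le' fun x y => by simpa only [dist_eq_norm] using hK y x).continuous

theorem le_add_inner_gradient_add_sq_of_lipschitz (hf : Differentiable ℝ f)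
    (hK : ∀ x y : E, ‖gradient f y - gradient f x‖ ≤ K * ‖y - x‖) (x y : E) :
    f y ≤ f x + ⟪gradient f x, y - x⟫ + K / 2 * ‖y - x‖ ^ 2 := by
  set v := y - x
  -- `φ` is antitone on `[0, ∞)`: its derivative is `⟪∇f(x + s v) - ∇f x, v⟫ - K s ‖v‖² ≤ 0`.
  let φ : ℝ → ℝ := fun s => f (x + s • v) - s * ⟪gradient f x, v⟫ - K / 2 * s ^ 2 * ‖v‖ ^ 2
  have hφ : ∀ s, HasDerivAt φ
      (⟪gradient f (x + s • v), v⟫ - ⟪gradient f x, v⟫ - K * s * ‖v‖ ^ 2) s := by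
    intro s
    have hline : HasDerivAt (fun s : ℝ => x + s • v) v s := by
      simpa using ((hasDerivAt_id s).smul_const v).const_add x
    have hfline := (hf (x + s • v)).hasGradientAt.hasFDerivAt.comp_hasDerivAt s hline
    have := (hfline.sub ((hasDerivAt_id s).mul_const ⟪gradient f x, v⟫)).sub
      (((hasDerivAt_pow 2 s).const_mul (K / 2)).mul_const (‖v‖ ^ 2))
    refine (this : HasDerivAt φ _ s).congr_deriv ?_
    rw [InnerProductSpace.toDual_apply_apply]
    ring
  have hanti : AntitoneOn φ (Set.Ici 0) := by
    refine antitoneOn_of_hasDerivWithinAt_nonpos (convex_Ici 0)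
      (fun s _ => (hφ s).continuousAt.continuousWithinAt) (fun s _ => (hφ s).hasDerivWithinAt)
      fun s hs => ?_
    rw [interior_Ici, Set.mem_Ioi] at hs
    have hlip : ‖gradient f (x + s • v) - gradient f x‖ ≤ K * (s * ‖v‖) := by
      simpa [norm_smul, abs_of_pos hs] using hK x (x + s • v)
    have hcs := real_inner_le_norm (gradient f (x + s • v) - gradient f x) v
    rw [inner_sub_left] at hcs
    nlinarith [norm_nonneg v]
  have h10 : φ 1 ≤ φ 0 := hanti Set.self_mem_Ici (Set.mem_Ici.2 zero_le_one) zero_le_one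
  simp only [φ, one_smul, zero_smul, add_zero, one_mul, zero_mul, sub_zero, one_pow,
    add_sub_cancel, ne_eq, OfNat.ofNat_ne_zero, not_false_eq_true, zero_pow, mul_zero, v] at h10
  linarith

theorem apply_sub_smul_le_of_lipschitz (hf : Differentiable ℝ f)
    (hK : ∀ x y : E, ‖gradient f y - gradient f x‖ ≤ K * ‖y - x‖) (x v : E) (η : ℝ) :
    f (x - η • v) ≤ f x - η * ⟪gradient f x, v⟫ + K / 2 * η ^ 2 * ‖v‖ ^ 2 := by
  have h := le_add_inner_gradient_add_sq_of_lipschitz hf hK x (x - η • v)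
  rw [sub_sub_cancel_left, inner_neg_right, real_inner_smul_right, norm_neg, norm_smul,
    Real.norm_eq_abs, mul_pow, sq_abs] at h
  linarith

theorem sq_norm_gradient_le_of_lipschitz (hf : Differentiable ℝ f)
    (hK : ∀ x y : E, ‖gradient f y - gradient f x‖ ≤ K * ‖y - x‖) (hK0 : 0 < K)
    {c : ℝ} (hc : ∀ x, c ≤ f x) (x : E) :
    ‖gradient f x‖ ^ 2 ≤ 2 * K * (f x - c) := by
  have h := apply_sub_smul_le_of_lipschitz hf hK x (gradient f x) K⁻¹
  rw [real_inner_self_eq_norm_sq] at h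
  have hdecr : K⁻¹ * ‖gradient f x‖ ^ 2 / 2 ≤ f x - c := by
    have hquad : K / 2 * K⁻¹ ^ 2 * ‖gradient f x‖ ^ 2 = K⁻¹ * ‖gradient f x‖ ^ 2 / 2 := by
      field_simp
    linarith [hc (x - K⁻¹ • gradient f x)]
  calc ‖gradient f x‖ ^ 2 = 2 * K * (K⁻¹ * ‖gradient f x‖ ^ 2 / 2) := by field_simp
    _ ≤ 2 * K * (f x - c) := by gcongr

end Smooth

section CondExp

variable {Ω E : Type*} {m m0 : MeasurableSpace Ω} {μ : Measure Ω}
  [NormedAddCommGroup E] [InnerProductSpace ℝ E] {f g : Ω → E}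

theorem MeasureTheory.MemLp.integrable_inner (hf : MemLp f 2 μ) (hg : MemLp g 2 μ) :
    Integrable (fun ω => ⟪f ω, g ω⟫) μ :=
  memLp_one_iff_integrable.1 ((innerSL ℝ).memLp_of_bilin 1 hf hg)

variable [CompleteSpace E]

theorem integral_inner_condExp_of_stronglyMeasurable_left (hm : m ≤ m0)
    [SigmaFinite (μ.trim hm)] (hf : StronglyMeasurable[m] f)
    (hfg : Integrable (fun ω => ⟪f ω, g ω⟫) μ) (hg : Integrable g μ) :
    ∫ ω, ⟪f ω, (μ[g|m]) ω⟫ ∂μ = ∫ ω, ⟪f ω, g ω⟫ ∂μ :=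
  (integral_congr_ae (condExp_bilin_of_stronglyMeasurable_left (innerSL ℝ) hf hfg hg).symm).trans
    (integral_condExp hm)

theorem integral_sq_norm_eq_integral_sq_norm_sub_condExp_add [IsFiniteMeasure μ]
    (hm : m ≤ m0) (hg : MemLp g 2 μ) :
    ∫ ω, ‖g ω‖ ^ 2 ∂μ = ∫ ω, ‖g ω - (μ[g|m]) ω‖ ^ 2 ∂μ + ∫ ω, ‖(μ[g|m]) ω‖ ^ 2 ∂μ := by
  have hc : MemLp (μ[g|m]) 2 μ := hg.condExp one_le_two
  have hcross : ∫ ω, ⟪g ω, (μ[g|m]) ω⟫ ∂μ = ∫ ω, ‖(μ[g|m]) ω‖ ^ 2 ∂μ := calc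
    _ = ∫ ω, ⟪(μ[g|m]) ω, g ω⟫ ∂μ := integral_congr_ae (.of_forall fun ω => real_inner_comm _ _)
    _ = ∫ ω, ⟪(μ[g|m]) ω, (μ[g|m]) ω⟫ ∂μ := (integral_inner_condExp_of_stronglyMeasurable_left
          hm stronglyMeasurable_condExp (hc.integrable_inner hg) (hg.integrable one_le_two)).symm
    _ = _ := by simp_rw [real_inner_self_eq_norm_sq]
  have hg2 := hg.integrable_norm_pow two_ne_zero
  have hc2 := hc.integrable_norm_pow two_ne_zero
  have hgc := (hg.integrable_inner hc).const_mul 2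
  simp_rw [norm_sub_sq_real]
  rw [integral_add, integral_sub, integral_const_mul, hcross]
  · ring
  exacts [hg2, hgc, hg2.sub hgc, hc2]

end CondExp

section BiasVariance

variable {Ω E : Type*} {m m0 : MeasurableSpace Ω} {μ : Measure Ω} [NormedAddCommGroup E]
  {B σ2 : ℝ} {g G : Ω → E}

theorem sq_norm_le_two_mul_sq_add_two_mul_sq {a b : E} (h : ‖b - a‖ ≤ B) :
    ‖b‖ ^ 2 ≤ 2 * ‖a‖ ^ 2 + 2 * B ^ 2 := by
  have htri : ‖b‖ ≤ ‖a‖ + ‖b - a‖ := norm_le_norm_add_norm_sub' b a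
  have hsq : ‖b - a‖ ^ 2 ≤ B ^ 2 := pow_le_pow_left₀ (norm_nonneg _) h 2
  nlinarith [sq_nonneg (‖a‖ - ‖b - a‖), norm_nonneg b]

variable [InnerProductSpace ℝ E]

theorem half_sq_norm_sub_half_sq_le_inner {a b : E} (h : ‖b - a‖ ≤ B) :
    ‖a‖ ^ 2 / 2 - B ^ 2 / 2 ≤ ⟪a, b⟫ := by
  have hab : ⟪a, b⟫ = ‖a‖ ^ 2 + ⟪a, b - a⟫ := by
    rw [inner_sub_right, real_inner_self_eq_norm_sq]; ring
  have hcs : -(‖a‖ * B) ≤ ⟪a, b - a⟫ :=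
    (neg_le_neg (mul_le_mul_of_nonneg_left h (norm_nonneg a))).trans (neg_le_of_abs_le
      (abs_real_inner_le_norm a (b - a)))
  nlinarith [sq_nonneg (‖a‖ - B)]

variable [CompleteSpace E] [IsProbabilityMeasure μ]

theorem half_integral_sq_norm_sub_half_sq_le_integral_inner (hm : m ≤ m0)
    (hgm : StronglyMeasurable[m] g) (hg : MemLp g 2 μ) (hG : MemLp G 2 μ)
    (hbias : ∀ᵐ ω ∂μ, ‖(μ[G|m]) ω - g ω‖ ≤ B) :
    (∫ ω, ‖g ω‖ ^ 2 ∂μ) / 2 - B ^ 2 / 2 ≤ ∫ ω, ⟪g ω, G ω⟫ ∂μ := by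
  rw [← integral_inner_condExp_of_stronglyMeasurable_left hm hgm (hg.integrable_inner hG)
    (hG.integrable one_le_two)]
  have hg2 := (hg.integrable_norm_pow two_ne_zero).div_const 2
  calc (∫ ω, ‖g ω‖ ^ 2 ∂μ) / 2 - B ^ 2 / 2 = ∫ ω, (‖g ω‖ ^ 2 / 2 - B ^ 2 / 2) ∂μ := by
        rw [integral_sub hg2 (integrable_const _), integral_div, integral_const, probReal_univ,
          one_smul]
    _ ≤ ∫ ω, ⟪g ω, (μ[G|m]) ω⟫ ∂μ :=
        integral_mono_ae (hg2.sub (integrable_const _))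
          (hg.integrable_inner (hG.condExp one_le_two))
          (hbias.mono fun _ => half_sq_norm_sub_half_sq_le_inner)

theorem integral_sq_norm_le_of_condExp_bias_variance (hm : m ≤ m0) (hg : MemLp g 2 μ)
    (hG : MemLp G 2 μ) (hbias : ∀ᵐ ω ∂μ, ‖(μ[G|m]) ω - g ω‖ ≤ B)
    (hvar : ∀ᵐ ω ∂μ, (μ[(fun ω' => ‖G ω' - (μ[G|m]) ω'‖ ^ 2)|m]) ω ≤ σ2) :
    ∫ ω, ‖G ω‖ ^ 2 ∂μ ≤ σ2 + 2 * ∫ ω, ‖g ω‖ ^ 2 ∂μ + 2 * B ^ 2 := by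
  have hnoise : ∫ ω, ‖G ω - (μ[G|m]) ω‖ ^ 2 ∂μ ≤ σ2 := by
    rw [← integral_condExp hm]
    calc _ ≤ ∫ _, σ2 ∂μ := integral_mono_ae integrable_condExp (integrable_const _) hvar
      _ = σ2 := by simp
  have hg2 := (hg.integrable_norm_pow two_ne_zero).const_mul 2
  have hmean : ∫ ω, ‖(μ[G|m]) ω‖ ^ 2 ∂μ ≤ 2 * ∫ ω, ‖g ω‖ ^ 2 ∂μ + 2 * B ^ 2 := calc
    _ ≤ ∫ ω, (2 * ‖g ω‖ ^ 2 + 2 * B ^ 2) ∂μ :=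
        integral_mono_ae ((hG.condExp one_le_two).integrable_norm_pow two_ne_zero)
          (hg2.add (integrable_const _))
          (hbias.mono fun _ => sq_norm_le_two_mul_sq_add_two_mul_sq)
    _ = _ := by
        rw [integral_add hg2 (integrable_const _), integral_const_mul, integral_const,
          probReal_univ, one_smul]
  rw [integral_sq_norm_eq_integral_sq_norm_sub_condExp_add hm hG]
  linarith

end BiasVariance

section SGDStep

variable {Ω E : Type*} {m m0 : MeasurableSpace Ω} {μ : Measure Ω}
  [NormedAddCommGroup E] [InnerProductSpace ℝ E] [CompleteSpace E]
  {f : E → ℝ} {K c η B σ2 : ℝ} {x G : Ω → E}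

theorem memLp_gradient_comp_of_lipschitz [IsFiniteMeasure μ] (hf : Differentiable ℝ f)
    (hK : ∀ x y : E, ‖gradient f y - gradient f x‖ ≤ K * ‖y - x‖) (hK0 : 0 < K)
    (hc : ∀ x, c ≤ f x) (hx : AEStronglyMeasurable x μ)
    (hfx : Integrable (fun ω => f (x ω)) μ) :
    MemLp (fun ω => gradient f (x ω)) 2 μ := by
  have hmeas := (continuous_gradient_of_lipschitz hK).comp_aestronglyMeasurable hx
  refine (memLp_two_iff_integrable_sq_norm hmeas).2 (integrable_of_le_of_le (by fun_prop)
    (ae_of_all _ fun ω => sq_nonneg _) (ae_of_all _ fun ω => ?_) (integrable_zero _ _ μ)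
    ((hfx.sub (integrable_const c)).const_mul (2 * K)))
  exact sq_norm_gradient_le_of_lipschitz hf hK hK0 hc (x ω)

theorem integrable_comp_sub_smul_of_lipschitz [IsFiniteMeasure μ] (hf : Differentiable ℝ f)
    (hK : ∀ x y : E, ‖gradient f y - gradient f x‖ ≤ K * ‖y - x‖) (hK0 : 0 < K)
    (hc : ∀ x, c ≤ f x) (hx : AEStronglyMeasurable x μ) (hG : MemLp G 2 μ)
    (hfx : Integrable (fun ω => f (x ω)) μ) (η : ℝ) :
    Integrable (fun ω => f (x ω - η • G ω)) μ := by
  have hg := memLp_gradient_comp_of_lipschitz hf hK hK0 hc hx hfx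
  refine integrable_of_le_of_le
    (hf.continuous.comp_aestronglyMeasurable (hx.sub (hG.1.const_smul η)))
    (ae_of_all _ fun ω => hc _)
    (ae_of_all _ fun ω => apply_sub_smul_le_of_lipschitz hf hK (x ω) (G ω) η)
    (integrable_const c) ?_
  exact (hfx.sub ((hg.integrable_inner hG).const_mul η)).add
    ((hG.integrable_norm_pow two_ne_zero).const_mul _)

theorem integral_sq_norm_gradient_le_of_sgd_step [IsProbabilityMeasure μ] (hm : m ≤ m0)
    (hf : Differentiable ℝ f)
    (hK : ∀ x y : E, ‖gradient f y - gradient f x‖ ≤ K * ‖y - x‖) (hK0 : 0 < K)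
    (hc : ∀ x, c ≤ f x) (hη : 0 < η) (hηK : η ≤ 1 / (4 * K))
    (hx : StronglyMeasurable[m] x) (hG : MemLp G 2 μ) (hfx : Integrable (fun ω => f (x ω)) μ)
    (hbias : ∀ᵐ ω ∂μ, ‖(μ[G|m]) ω - gradient f (x ω)‖ ≤ B)
    (hvar : ∀ᵐ ω ∂μ, (μ[(fun ω' => ‖G ω' - (μ[G|m]) ω'‖ ^ 2)|m]) ω ≤ σ2) :
    ∫ ω, ‖gradient f (x ω)‖ ^ 2 ∂μ ≤
      4 / η * ((∫ ω, f (x ω) ∂μ) - ∫ ω, f (x ω - η • G ω) ∂μ) +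
        ((2 + 4 * η * K) * B ^ 2 + 2 * η * K * σ2) := by
  have hx' : AEStronglyMeasurable x μ := (hx.mono hm).aestronglyMeasurable
  have hg := memLp_gradient_comp_of_lipschitz hf hK hK0 hc hx' hfx
  have hgm : StronglyMeasurable[m] fun ω => gradient f (x ω) :=
    (continuous_gradient_of_lipschitz hK).comp_stronglyMeasurable hx
  have hinner := half_integral_sq_norm_sub_half_sq_le_integral_inner hm hgm hg hG hbias
  have hsecond := integral_sq_norm_le_of_condExp_bias_variance hm hg hG hbias hvar
  have hdescent : ∫ ω, f (x ω - η • G ω) ∂μ ≤ (∫ ω, f (x ω) ∂μ) -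
      η * (∫ ω, ⟪gradient f (x ω), G ω⟫ ∂μ) + K / 2 * η ^ 2 * ∫ ω, ‖G ω‖ ^ 2 ∂μ := by
    have hgG := (hg.integrable_inner hG).const_mul η
    have hG2 := (hG.integrable_norm_pow two_ne_zero).const_mul (K / 2 * η ^ 2)
    calc _ ≤ ∫ ω, (f (x ω) - η * ⟪gradient f (x ω), G ω⟫ + K / 2 * η ^ 2 * ‖G ω‖ ^ 2) ∂μ :=
          integral_mono (integrable_comp_sub_smul_of_lipschitz hf hK hK0 hc hx' hG hfx η)
            ((hfx.sub hgG).add hG2) fun ω => apply_sub_smul_le_of_lipschitz hf hK (x ω) (G ω) η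
      _ = _ := by
          rw [integral_add, integral_sub, integral_const_mul, integral_const_mul]
          exacts [hfx, hgG, hfx.sub hgG, hG2]
  have hηK' : η * K ≤ 1 / 4 := by
    rw [le_div_iff₀ (by positivity)] at hηK
    linarith
  have hS : 0 ≤ ∫ ω, ‖gradient f (x ω)‖ ^ 2 ∂μ := integral_nonneg fun _ => sq_nonneg _
  -- Since `η K ≤ 1/4`, the `K η² ‖∇f‖²` part of the second moment eats at most half of the
  -- decrease `η ‖∇f‖² / 2` coming from the inner product.
  have hquarter : η / 4 * ∫ ω, ‖gradient f (x ω)‖ ^ 2 ∂μ ≤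
      (∫ ω, f (x ω) ∂μ) - (∫ ω, f (x ω - η • G ω) ∂μ) +
        η / 4 * ((2 + 4 * η * K) * B ^ 2 + 2 * η * K * σ2) := by
    nlinarith [mul_le_mul_of_nonneg_left hinner hη.le,
      mul_le_mul_of_nonneg_left hsecond (by positivity : 0 ≤ K / 2 * η ^ 2),
      mul_nonneg (mul_nonneg hη.le hS) (sub_nonneg.2 hηK')]
  calc ∫ ω, ‖gradient f (x ω)‖ ^ 2 ∂μ = 4 / η * (η / 4 * ∫ ω, ‖gradient f (x ω)‖ ^ 2 ∂μ) := by
        field_simp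
    _ ≤ 4 / η * ((∫ ω, f (x ω) ∂μ) - (∫ ω, f (x ω - η • G ω) ∂μ) +
          η / 4 * ((2 + 4 * η * K) * B ^ 2 + 2 * η * K * σ2)) := by gcongr
    _ = _ := by field_simp

end SGDStep

theorem one_div_mul_sum_range_le_of_le_sub_succ {a s : ℕ → ℝ} {c R l : ℝ} (hc : 0 ≤ c)
    (h : ∀ t, s t ≤ c * (a t - a (t + 1)) + R) (hl : ∀ t, l ≤ a t) {T : ℕ} (hT : 1 ≤ T) :
    1 / (T : ℝ) * ∑ t ∈ Finset.range T, s t ≤ c * (a 0 - l) / T + R := by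
  have hT' : (0 : ℝ) < T := by exact_mod_cast hT
  have hsum : ∑ t ∈ Finset.range T, s t ≤ c * (a 0 - l) + T * R := calc
    _ ≤ ∑ t ∈ Finset.range T, (c * (a t - a (t + 1)) + R) := Finset.sum_le_sum fun t _ => h t
    _ = c * (a 0 - a T) + T * R := by
        rw [Finset.sum_add_distrib, ← Finset.mul_sum, Finset.sum_range_sub', Finset.sum_const,
          Finset.card_range, nsmul_eq_mul]
    _ ≤ _ := by gcongr; exact hl T
  rw [div_add' _ _ _ hT'.ne', one_div_mul_eq_div]
  gcongr
  linarith

theorem sgd_low_precision_convergence_general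
    {Ω : Type*} {m0 : MeasurableSpace Ω} (μ : Measure Ω) [IsProbabilityMeasure μ]
    (ℱ : Filtration ℕ m0)
    (d : ℕ) (L : EuclideanSpace ℝ (Fin d) → ℝ) (𝓛 : ℝ) (h𝓛 : 0 < 𝓛)
    (hdiff : Differentiable ℝ L)
    (hlip : ∀ w w' : EuclideanSpace ℝ (Fin d),
      ‖gradient L w' - gradient L w‖ ≤ 𝓛 * ‖w' - w‖)
    (Lmin : ℝ) (hbelow : ∀ w, Lmin ≤ L w)
    (η : ℝ) (hη : 0 < η) (hη' : η ≤ 1 / (4 * 𝓛))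
    (T : ℕ) (hT : 1 ≤ T)
    (BW σS σQ : ℝ)
    (b : ℕ)
    (w G : ℕ → Ω → EuclideanSpace ℝ (Fin d))
    (hadapted : Adapted ℱ w)
    (hGL2 : ∀ t, MemLp (G t) 2 μ)
    (hupdate : ∀ t ω, w (t + 1) ω = w t ω - η • G t ω)
    (hL0int : Integrable (fun ω => L (w 0 ω)) μ)
    (hbias : ∀ t, ∀ᵐ ω ∂μ,
      ‖(μ[G t | ℱ t]) ω - gradient L (w t ω)‖ ≤ BW)
    (hvar : ∀ t, ∀ᵐ ω ∂μ,
      (μ[(fun ω' => ‖G t ω' - (μ[G t | ℱ t]) ω'‖ ^ 2) | ℱ t]) ω ≤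
        (σS ^ 2 + σQ ^ 2) / b) :
    (1 / (T : ℝ)) * ∑ t ∈ Finset.range T, ∫ ω, ‖gradient L (w t ω)‖ ^ 2 ∂μ ≤
      4 * ((∫ ω, L (w 0 ω) ∂μ) - Lmin) / (η * T) +
        (2 + 4 * η * 𝓛) * BW ^ 2 + 2 * η * 𝓛 * (σS ^ 2 + σQ ^ 2) / b := by
  have hint : ∀ t, Integrable (fun ω => L (w t ω)) μ := by
    intro t
    induction t with
    | zero => exact hL0int
    | succ t ih =>
      simpa only [hupdate] using integrable_comp_sub_smul_of_lipschitz hdiff hlip h𝓛 hbelow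
        ((hadapted t).stronglyMeasurable.mono (ℱ.le t)).aestronglyMeasurable (hGL2 t) ih η
  have hstep : ∀ t, ∫ ω, ‖gradient L (w t ω)‖ ^ 2 ∂μ ≤
      4 / η * ((∫ ω, L (w t ω) ∂μ) - ∫ ω, L (w (t + 1) ω) ∂μ) +
        ((2 + 4 * η * 𝓛) * BW ^ 2 + 2 * η * 𝓛 * ((σS ^ 2 + σQ ^ 2) / b)) := fun t => by
    simpa only [hupdate] using integral_sq_norm_gradient_le_of_sgd_step (ℱ.le t) hdiff hlip h𝓛
      hbelow hη hη' (hadapted t).stronglyMeasurable (hGL2 t) (hint t) (hbias t) (hvar t)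
  have hLmin : ∀ t, Lmin ≤ ∫ ω, L (w t ω) ∂μ := fun t => by
    simpa using integral_mono (integrable_const Lmin) (hint t) fun ω => hbelow (w t ω)
  refine (one_div_mul_sum_range_le_of_le_sub_succ (by positivity) hstep hLmin hT).trans_eq ?_
  ring

/-- Convergence of SGD with low-precision gradients. Under `𝓛`-smoothness of `L` (bounded
below by `L_min`), step size `0 < η ≤ 1/(4𝓛)`, an adapted iterate process `w_{t+1} = w_t −
η·G_t` where the estimator `G_t` has conditional bias at most `B_W` relative to the true
gradient and conditional variance at most `(σ_S² + σ_Q²)/b`, the average expected squared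
gradient norm over `T` iterations is bounded by
`4·(E[L(w_0)] − L_min)/(η·T) + (2 + 4η𝓛)·B_W² + 2η𝓛·(σ_S² + σ_Q²)/b`. -/
theorem sgd_low_precision_convergence
    {Ω : Type*} {m0 : MeasurableSpace Ω} (μ : Measure Ω) [IsProbabilityMeasure μ]
    (ℱ : Filtration ℕ m0)
    (d : ℕ) (L : EuclideanSpace ℝ (Fin d) → ℝ) (𝓛 : ℝ) (h𝓛 : 0 < 𝓛)
    (hdiff : Differentiable ℝ L)
    (hlip : ∀ w w' : EuclideanSpace ℝ (Fin d),
      ‖gradient L w' - gradient L w‖ ≤ 𝓛 * ‖w' - w‖)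
    (Lmin : ℝ) (hbelow : ∀ w, Lmin ≤ L w)
    (η : ℝ) (hη : 0 < η) (hη' : η ≤ 1 / (4 * 𝓛))
    (T : ℕ) (hT : 1 ≤ T)
    (BW σS σQ : ℝ) (hBW : 0 ≤ BW) (hσS : 0 ≤ σS) (hσQ : 0 ≤ σQ)
    (b : ℕ) (hb : 1 ≤ b)
    (w G : ℕ → Ω → EuclideanSpace ℝ (Fin d))
    (hadapted : Adapted ℱ w)
    (hGmeas : ∀ t, StronglyMeasurable[ℱ (t + 1)] (G t))
    (hGL2 : ∀ t, MemLp (G t) 2 μ)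
    (hupdate : ∀ t ω, w (t + 1) ω = w t ω - η • G t ω)
    (hL0int : Integrable (fun ω => L (w 0 ω)) μ)
    (hbias : ∀ t, ∀ᵐ ω ∂μ,
      ‖(μ[G t | ℱ t]) ω - gradient L (w t ω)‖ ≤ BW)
    (hvar : ∀ t, ∀ᵐ ω ∂μ,
      (μ[(fun ω' => ‖G t ω' - (μ[G t | ℱ t]) ω'‖ ^ 2) | ℱ t]) ω ≤
        (σS ^ 2 + σQ ^ 2) / b) :
    (1 / (T : ℝ)) * ∑ t ∈ Finset.range T, ∫ ω, ‖gradient L (w t ω)‖ ^ 2 ∂μ ≤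
      4 * ((∫ ω, L (w 0 ω) ∂μ) - Lmin) / (η * T) +
        (2 + 4 * η * 𝓛) * BW ^ 2 + 2 * η * 𝓛 * (σS ^ 2 + σQ ^ 2) / b :=
  sgd_low_precision_convergence_general μ ℱ d L 𝓛 h𝓛 hdiff hlip Lmin hbelow η hη hη' T hT BW σS σQ b
    w G hadapted hGL2 hupdate hL0int hbias hvar
end
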